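/- arXiv:2111.12023 — 2 statements merged into one kernel-verified Lean document; each statement's English description precedes it below -/
import Mathlib

section
/- Let γ_a (a = 1,...,D) generate, together with the identity, the full matrix algebra M_d(ℂ), and let ⟨ψ,φ⟩₀ := ψ† h φ be a nondegenerate sesquilinear form (h invertible) satisfying ⟨γ_a ψ, φ⟩₀ = (-1)^s ⟨ψ, γ_a φ⟩₀ for all a. Then any other sesquilinear form ⟨·,·⟩₁ with the same compatibility property is given by ⟨ψ,φ⟩₁ = λ·⟨ψ,φ⟩₀ for some complex scalar λ. -/
set_option maxHeartbeats 1000000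

open Matrix

/-- Uniqueness up to scale of the spin metric: if the `γ_a` (with the identity)
generate `M_d(ℂ)`, `h` is invertible and γ-compatible (`γ_a† h = (-1)^s h γ_a`),
then any other γ-compatible sesquilinear form `m` is a scalar multiple of `h`. -/
theorem stmt14 {D d : ℕ} (s : ℕ)
    (γ : Fin D → Matrix (Fin d) (Fin d) ℂ)
    (hgen : Submodule.span ℂ
      (Set.range fun l : List (Fin D) => (l.map γ).prod)
      = (⊤ : Submodule ℂ (Matrix (Fin d) (Fin d) ℂ)))
    (h : Matrix (Fin d) (Fin d) ℂ) (hinv : IsUnit h)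
    (hcompat : ∀ a, (γ a)ᴴ * h = ((-1 : ℂ) ^ s) • (h * γ a))
    (m : Matrix (Fin d) (Fin d) ℂ)
    (mcompat : ∀ a, (γ a)ᴴ * m = ((-1 : ℂ) ^ s) • (m * γ a)) :
    ∃ lam : ℂ, m = lam • h := by
  obtain ⟨Hinv⟩ := hinv.nonempty_invertible
  set T : Matrix (Fin d) (Fin d) ℂ := ⅟h * m with hT
  have hε : ((-1 : ℂ) ^ s) ≠ 0 := pow_ne_zero _ (by norm_num)
  -- T commutes with each γ a
  have hcomm : ∀ a, γ a * T = T * γ a := by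
    intro a
    have h1 : (γ a)ᴴ = ((-1 : ℂ) ^ s) • (h * γ a * ⅟h) := by
      calc (γ a)ᴴ = (γ a)ᴴ * h * ⅟h := by rw [mul_assoc, mul_invOf_self, mul_one]
        _ = ((-1 : ℂ) ^ s) • (h * γ a * ⅟h) := by rw [hcompat a, smul_mul_assoc]
    have h2 : ((-1 : ℂ) ^ s) • (h * γ a * ⅟h * m) = ((-1 : ℂ) ^ s) • (m * γ a) := by
      rw [← smul_mul_assoc, ← h1, mcompat a]
    have h3 : h * γ a * ⅟h * m = m * γ a := smul_right_injective _ hε h2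
    have h4 : ⅟h * (h * γ a * ⅟h * m) = ⅟h * (m * γ a) := by rw [h3]
    calc γ a * T = ⅟h * (h * γ a * ⅟h * m) := by
          simp [hT, mul_assoc, invOf_mul_self]
      _ = ⅟h * (m * γ a) := h4
      _ = T * γ a := by simp [hT, mul_assoc]
  -- T commutes with all products
  have hlist : ∀ l : List (Fin D), (l.map γ).prod * T = T * (l.map γ).prod := by
    intro l
    induction l with
    | nil => simp
    | cons a l ih =>
        simp only [List.map_cons, List.prod_cons, mul_assoc, ih]
        rw [← mul_assoc, hcomm a, mul_assoc]
  -- T commutes with everything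
  have hall : ∀ x : Matrix (Fin d) (Fin d) ℂ, x * T = T * x := by
    intro x
    have hx : x ∈ Submodule.span ℂ
        (Set.range fun l : List (Fin D) => (l.map γ).prod) := by
      rw [hgen]; trivial
    refine Submodule.span_induction ?_ ?_ ?_ ?_ hx
    · rintro _ ⟨l, rfl⟩; exact hlist l
    · simp
    · intro a b _ _ ha hb; rw [add_mul, mul_add, ha, hb]
    · intro c a _ ha; rw [smul_mul_assoc, mul_smul_comm, ha]
  -- hence T is scalar
  obtain ⟨lam, hlam⟩ := mem_range_scalar_of_commute_single
    (M := T) (fun i j _ => hall _)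
  refine ⟨lam, ?_⟩
  have : m = h * T := by rw [hT, ← mul_assoc, mul_invOf_self, one_mul]
  rw [this, ← hlam]
  ext i j
  simp [Matrix.mul_diagonal, mul_comm]
end

section
/- Let (V_i) be a locally finite open cover of a paracompact space M with partition of unity (χ_i) subordinate to it, and let α_{ij} : V_i ∩ V_j → ℝ be a cocycle of continuous functions (α_{ij} + α_{jk} + α_{ki} = 0 on triple overlaps and α_{ii} = 0). Then there exist continuous functions f_i : V_i → ℝ with α_{ij} = f_j - f_i on V_i ∩ V_j (namely f_i := Σ_k χ_k α_{ki}). -/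
/-- On a paracompact space, every continuous real-valued Čech 1-cocycle
subordinate to a locally finite open cover with a partition of unity is a
coboundary: there are `f_i : V_i → ℝ` with `α_{ij} = f_j - f_i` on overlaps. -/
theorem stmt16 {M : Type*} [TopologicalSpace M] [ParacompactSpace M]
    {ι : Type*} (V : ι → Set M)
    (hVopen : ∀ i, IsOpen (V i)) (hVcover : (⋃ i, V i) = Set.univ)
    (hVlf : LocallyFinite V)
    (χ : PartitionOfUnity ι M) (hχ : χ.IsSubordinate V)
    (α : ι → ι → M → ℝ)
    (hαcont : ∀ i j, ContinuousOn (α i j) (V i ∩ V j))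
    (hαskew : ∀ i, ∀ x ∈ V i, α i i x = 0)
    (hαcocycle : ∀ i j k, ∀ x ∈ V i ∩ V j ∩ V k,
      α i j x + α j k x + α k i x = 0) :
    ∃ f : ι → M → ℝ, (∀ i, ContinuousOn (f i) (V i)) ∧
      ∀ i j, ∀ x ∈ V i ∩ V j, α i j x = f j x - f i x := by
  classical
  have hmemV : ∀ k x, χ k x ≠ 0 → x ∈ V k := fun k x hx =>
    hχ k (subset_closure (by simpa [Function.mem_support] using hx))
  refine ⟨fun i x => ∑ᶠ k, χ k x * α k i x, ?_, ?_⟩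
  · intro i
    rw [continuousOn_iff_continuous_restrict]
    have : Set.restrict (V i) (fun x => ∑ᶠ k, χ k x * α k i x)
        = fun x : V i => ∑ᶠ k, χ k (x : M) * α k i (x : M) := rfl
    change Continuous (fun x : V i => ∑ᶠ k, χ k (x : M) * α k i (x : M))
    apply continuous_finsum
    · intro k
      rw [continuous_iff_continuousAt]
      intro x
      by_cases hk : (x : M) ∈ V k
      · have hA : ContinuousAt (α k i) (x : M) :=
          (hαcont k i).continuousAt
            (((hVopen k).inter (hVopen i)).mem_nhds ⟨hk, x.2⟩)
        have hχc : ContinuousAt (χ k) (x : M) := (χ k).continuous.continuousAt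
        exact ((hχc.mul hA).comp continuous_subtype_val.continuousAt)
      · have hx : (x : M) ∈ (tsupport (χ k))ᶜ := fun h => hk (hχ k h)
        have hU : IsOpen ((tsupport (χ k))ᶜ) := (isClosed_tsupport _).isOpen_compl
        have hnz : ∀ᶠ y : V i in nhds x, χ k (y : M) * α k i (y : M) = 0 := by
          have : (Subtype.val ⁻¹' (tsupport (χ k))ᶜ : Set (V i)) ∈ nhds x :=
            (hU.preimage continuous_subtype_val).mem_nhds hx
          filter_upwards [this] with y hy
          have : χ k (y : M) = 0 := image_eq_zero_of_notMem_tsupport hy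
          simp [this]
        exact ContinuousAt.congr continuousAt_const (hnz.mono fun y hy => hy.symm)
    · have := χ.locallyFinite.preimage_continuous
        (continuous_subtype_val : Continuous ((↑) : V i → M))
      refine this.subset fun k => ?_
      intro y hy
      simp only [Set.mem_preimage, Function.mem_support] at *
      exact fun h => hy (by simp [h])
  · intro i j x hx
    have hfin : {k | x ∈ Function.support (χ k)}.Finite :=
      χ.locallyFinite.point_finite x
    set t : Finset ι := hfin.toFinset with ht
    have hsub : ∀ m : ι, (Function.support fun k => χ k x * α k m x) ⊆ ↑t := by
      intro m k hk
      simp only [Function.mem_support] at hk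
      have : χ k x ≠ 0 := fun h => hk (by simp [h])
      simpa [ht, Set.Finite.mem_toFinset, Function.mem_support] using this
    have hfi : (∑ᶠ k, χ k x * α k i x) = ∑ k ∈ t, χ k x * α k i x :=
      finsum_eq_sum_of_support_subset _ (hsub i)
    have hfj : (∑ᶠ k, χ k x * α k j x) = ∑ k ∈ t, χ k x * α k j x :=
      finsum_eq_sum_of_support_subset _ (hsub j)
    have hsum1 : (∑ k ∈ t, χ k x) = 1 := by
      have h1 := χ.sum_eq_one (Set.mem_univ x)
      rw [← h1]
      exact (finsum_eq_sum_of_support_subset _ (by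
        intro k hk
        simpa [ht, Set.Finite.mem_toFinset, Function.mem_support] using hk)).symm
    have hterm : ∀ k ∈ t, χ k x * α k j x - χ k x * α k i x = χ k x * α i j x := by
      intro k hk
      rcases eq_or_ne (χ k x) 0 with h0 | h0
      · simp [h0]
      · have hxk : x ∈ V k := hmemV k x h0
        have hc1 := hαcocycle k i j x ⟨⟨hxk, hx.1⟩, hx.2⟩
        have hc2 := hαcocycle j k k x ⟨⟨hx.2, hxk⟩, hxk⟩
        have hs := hαskew k x hxk
        have : α k j x - α k i x = α i j x := by linarith
        rw [← mul_sub, this]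
    show α i j x = (∑ᶠ k, χ k x * α k j x) - ∑ᶠ k, χ k x * α k i x
    rw [hfi, hfj, ← Finset.sum_sub_distrib, Finset.sum_congr rfl hterm,
      ← Finset.sum_mul, hsum1, one_mul]
end
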